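/- arXiv:2110.10445 — 7 statements merged into one kernel-verified Lean document; each statement's English description precedes it below -/
import Mathlib

section
/- If S ⊆ ℤ^n is an L₂-convex set, then there exist values γ_{I,J} ∈ ℤ ∪ {+∞}, indexed by pairs of disjoint subsets I, J of N = {1,…,n} with |I| = |J|, such that S = {x ∈ ℤ^n : x(J) − x(I) ≤ γ_{I,J} for all disjoint I, J ⊆ N with |I| = |J|}. -/
open Pointwise

/-- A nonempty set `S ⊆ ℤⁿ` is L-convex if it is closed under componentwise
max/min and under translation by integer multiples of the all-ones vector. -/
def IsLConvexSet {n : ℕ} (S : Set (Fin n → ℤ)) : Prop :=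
  S.Nonempty ∧
  (∀ x ∈ S, ∀ y ∈ S, x ⊔ y ∈ S ∧ x ⊓ y ∈ S) ∧
  (∀ x ∈ S, ∀ μ : ℤ, (x + fun _ => μ) ∈ S)

/-- A set is L₂-convex if it is the Minkowski sum of two L-convex sets. -/
def IsL2ConvexSet {n : ℕ} (S : Set (Fin n → ℤ)) : Prop :=
  ∃ S₁ S₂ : Set (Fin n → ℤ), IsLConvexSet S₁ ∧ IsLConvexSet S₂ ∧ S = S₁ + S₂

/-!
Take `γ I J` to be the supremum of `x(J) - x(I)` over `S = S₁ + S₂`; only `⊇` needs an argument.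
An L-convex set is cut out by its difference bounds `y i - y j ≤ sup_{w ∈ S₁} (w i - w j)`, so
`x ∈ S₁ + S₂` as soon as the difference constraints `y i - y j ≤ d i j`, with
`d i j = min (sup_{S₁} (w i - w j)) (sup_{S₂} (w j - w i) + x i - x j)`, have an integer solution
`y`: then `y ∈ S₁` and `x - y ∈ S₂`. By the potential theorem this holds when every cycle, in
particular every cyclic permutation, has nonnegative `d`-weight, and splitting the weight of a
permutation according to which branch of each minimum is active bounds it below by
`sup_S (w(J) - w(I)) - (x(J) - x(I)) ≥ 0` for a suitable pair `|I| = |J|`.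
-/

open Finset

theorem WithTop.coe_sub_le_iff_le_add {a b : ℤ} {c : WithTop ℤ} :
    ((a - b : ℤ) : WithTop ℤ) ≤ c ↔ (a : WithTop ℤ) ≤ c + b := by
  cases c with
  | top => simp
  | coe c => norm_cast; omega

section SupOn

variable {α : Type*} {S : Set α} {f : α → ℤ}

-- For empty `S` this is a junk value.
noncomputable def supOn (S : Set α) (f : α → ℤ) : WithTop ℤ :=
  ⨆ a : S, (f a : WithTop ℤ)

theorem le_supOn {a : α} (ha : a ∈ S) : (f a : WithTop ℤ) ≤ supOn S f :=
  le_ciSup (f := fun a : S => (f a : WithTop ℤ)) (OrderTop.bddAbove _) ⟨a, ha⟩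

theorem supOn_le (hS : S.Nonempty) {c : WithTop ℤ} (h : ∀ a ∈ S, (f a : WithTop ℤ) ≤ c) :
    supOn S f ≤ c :=
  have := hS.to_subtype
  ciSup_le fun a => h a a.2

theorem exists_le_of_le_supOn (hS : S.Nonempty) {v : ℤ} (h : (v : WithTop ℤ) ≤ supOn S f) :
    ∃ a ∈ S, v ≤ f a := by
  have := hS.to_subtype
  have hlt : ((v - 1 : ℤ) : WithTop ℤ) < supOn S f := lt_of_lt_of_le (by norm_cast; omega) h
  obtain ⟨⟨a, ha⟩, hlt⟩ := exists_lt_of_lt_ciSup hlt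
  change ((v - 1 : ℤ) : WithTop ℤ) < f a at hlt
  exact ⟨a, ha, by norm_cast at hlt; omega⟩

end SupOn

section Potential

variable {ι : Type*} (d : ι → ι → WithTop ℤ)

def pathWeight : ι → List ι → WithTop ℤ
  | _, [] => 0
  | i, j :: l => d i j + pathWeight j l

theorem pathWeight_append (a : ι) (l₁ l₂ : List ι) (i : ι) :
    pathWeight d i (l₁ ++ a :: l₂) = pathWeight d i (l₁ ++ [a]) + pathWeight d a l₂ := by
  induction l₁ generalizing i with
  | nil => simp [pathWeight]
  | cons k l₁ ih => simp [pathWeight, ih, add_assoc]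

theorem pathWeight_eq_sum_zipWith (i : ι) (l : List ι) :
    pathWeight d i l = (List.zipWith d (i :: l) l).sum := by
  induction l generalizing i with
  | nil => rfl
  | cons j l ih => simp [pathWeight, ih]

variable {d}

/-- Shortcutting a walk at a repeated vertex drops a closed walk. -/
theorem exists_nodup_pathWeight_le
    (hcycle : ∀ v c, (v :: c).Nodup → 0 ≤ pathWeight d v (c ++ [v]))
    (i : ι) {l : List ι} (hl : l.Nodup) :
    ∃ r, (i :: r).Nodup ∧ pathWeight d i r ≤ pathWeight d i l := by
  by_cases hi : i ∈ l
  · obtain ⟨q, r, rfl⟩ := List.append_of_mem hi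
    have hqr := List.nodup_middle.1 hl
    refine ⟨r, hqr.sublist (List.cons_sublist_cons.2 (List.sublist_append_right q r)), ?_⟩
    rw [pathWeight_append]
    exact le_add_of_nonneg_left
      (hcycle i q (hqr.sublist (List.cons_sublist_cons.2 (List.sublist_append_left q r))))
  · exact ⟨l, List.nodup_cons.2 ⟨hi, hl⟩, le_rfl⟩

theorem exists_potential_of_cycle_nonneg [Fintype ι]
    (hcycle : ∀ v c, (v :: c).Nodup → 0 ≤ pathWeight d v (c ++ [v])) :
    ∃ y : ι → ℤ, ∀ i j, ((y i - y j : ℤ) : WithTop ℤ) ≤ d i j := by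
  have hmin : ∀ i, ∃ p, (i :: p).Nodup ∧
      ∀ q, (i :: q).Nodup → pathWeight d i p ≤ pathWeight d i q := by
    intro i
    have hfin : {p : List ι | (i :: p).Nodup}.Finite :=
      (List.finite_length_le ι (Fintype.card ι)).subset fun p hp =>
        (List.nodup_cons.1 hp).2.length_le_card
    exact Set.exists_min_image _ _ hfin ⟨[], List.nodup_singleton i⟩
  choose p hp hpmin using hmin
  have hne_top : ∀ i, pathWeight d i (p i) ≠ ⊤ := fun i =>
    ne_top_of_le_ne_top WithTop.zero_ne_top (hpmin i [] (List.nodup_singleton i))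
  refine ⟨fun i => (pathWeight d i (p i)).untop (hne_top i), fun i j => ?_⟩
  rw [WithTop.coe_sub_le_iff_le_add, WithTop.coe_untop, WithTop.coe_untop]
  obtain ⟨r, hr, hle⟩ := exists_nodup_pathWeight_le hcycle i (hp j)
  calc pathWeight d i (p i) ≤ pathWeight d i r := hpmin i r hr
    _ ≤ pathWeight d i (j :: p j) := hle
    _ = d i j + pathWeight d j (p j) := rfl

theorem List.map_formPerm_eq_rotate [DecidableEq ι] {l : List ι} (hl : l.Nodup) :
    l.map l.formPerm = l.rotate 1 :=
  List.ext_getElem (by simp) fun k h₁ h₂ => by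
    simp [List.formPerm_apply_getElem l hl, List.getElem_rotate]

theorem pathWeight_cycle_eq_sum_formPerm [DecidableEq ι] {v : ι} {c : List ι}
    (h : (v :: c).Nodup) :
    pathWeight d v (c ++ [v]) = ((v :: c).map fun u => d u ((v :: c).formPerm u)).sum := by
  have hrot : (v :: c).map (v :: c).formPerm = c ++ [v] := by
    rw [List.map_formPerm_eq_rotate h, List.rotate_cons_succ, List.rotate_zero]
  have hzip : (v :: c).map (fun u => d u ((v :: c).formPerm u)) =
      List.zipWith d (v :: c) (c ++ [v]) := by
    rw [← hrot, List.zipWith_map_right, List.zipWith_self]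
  rw [hzip, pathWeight_eq_sum_zipWith, ← List.cons_append, ← List.append_nil (c ++ [v]),
    List.zipWith_append (by simp)]
  simp

theorem exists_potential_of_sum_perm_nonneg [Fintype ι] [DecidableEq ι]
    (hdiag : ∀ u, d u u ≤ 0) (hperm : ∀ σ : Equiv.Perm ι, 0 ≤ ∑ u, d u (σ u)) :
    ∃ y : ι → ℤ, ∀ i j, ((y i - y j : ℤ) : WithTop ℤ) ≤ d i j := by
  refine exists_potential_of_cycle_nonneg fun v c h => ?_
  set σ := (v :: c).formPerm
  have hsplit := sum_filter_add_sum_filter_not univ (· ∈ v :: c) fun u => d u (σ u)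
  have hon : ∑ u ∈ univ with u ∈ v :: c, d u (σ u) = pathWeight d v (c ++ [v]) := by
    rw [pathWeight_cycle_eq_sum_formPerm h, ← List.sum_toFinset _ h]
    congr 1
    ext u
    simp
  have hoff : ∑ u ∈ univ with u ∉ v :: c, d u (σ u) ≤ 0 :=
    sum_nonpos fun u hu => by
      rw [List.formPerm_apply_of_notMem (mem_filter.1 hu).2]
      exact hdiag u
  rw [← hon]
  calc (0 : WithTop ℤ) ≤ ∑ u, d u (σ u) := hperm σ
    _ = _ := hsplit.symm
    _ ≤ _ := add_le_of_nonpos_right hoff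

end Potential

namespace IsLConvexSet

variable {n : ℕ} {S : Set (Fin n → ℤ)} {x : Fin n → ℤ}

theorem exists_mem_le_apply_eq (hS : IsLConvexSet S)
    (hx : ∀ i j, ((x i - x j : ℤ) : WithTop ℤ) ≤ supOn S fun w => w i - w j) (j : Fin n) :
    ∃ y ∈ S, y ≤ x ∧ y j = x j := by
  obtain ⟨hne, hlat, htrans⟩ := hS
  have hz : ∀ i, ∃ z ∈ S, x j - x i ≤ z j - z i := fun i => exists_le_of_le_supOn hne (hx j i)
  choose z hzS hz using hz
  -- `t i` agrees with `x` at `j` and lies below it at `i`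
  set t : Fin n → Fin n → ℤ := fun i => z i + fun _ => x j - z i j
  have htS : ∀ i, t i ∈ S := fun i => htrans _ (hzS i) _
  set y := univ.inf' ⟨j, mem_univ j⟩ t
  have hyS : y ∈ S := inf'_mem S (fun a ha b hb => (hlat a ha b hb).2) _ _ _ fun i _ => htS i
  have hyx : y ≤ x := fun k =>
    calc y k ≤ t k k := inf'_le t (mem_univ k) k
      _ ≤ x k := by simp only [t, Pi.add_apply]; linarith [hz k]
  refine ⟨y, hyS, hyx, le_antisymm (hyx j) ?_⟩
  rw [show y j = univ.inf' _ fun i => t i j from Finset.inf'_apply _ _ _]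
  exact le_inf' _ _ fun i _ => by simp [t]

theorem mem_of_forall_sub_le_supOn (hS : IsLConvexSet S)
    (hx : ∀ i j, ((x i - x j : ℤ) : WithTop ℤ) ≤ supOn S fun w => w i - w j) : x ∈ S := by
  rcases isEmpty_or_nonempty (Fin n) with hn | hn
  · obtain ⟨s, hs⟩ := hS.1
    rwa [Subsingleton.elim x s]
  choose y hyS hyx hyeq using hS.exists_mem_le_apply_eq hx
  have hx_eq : x = univ.sup' univ_nonempty y := by
    funext k
    rw [Finset.sup'_apply]
    exact le_antisymm ((hyeq k).ge.trans (le_sup' (fun j => y j k) (mem_univ k)))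
      (sup'_le _ _ fun j _ => hyx j k)
  rw [hx_eq]
  exact sup'_mem S (fun a ha b hb => (hS.2.1 a ha b hb).1) _ _ _ fun j _ => hyS j

end IsLConvexSet

section Splitting

variable {ι : Type*}

theorem sum_filter_sub_perm_eq [Fintype ι] {M : Type*} [AddCommGroup M] (σ : Equiv.Perm ι)
    (g : ι → M) (p : ι → Prop) [DecidablePred p] :
    ∑ u ∈ univ with p u, (g u - g (σ u)) = ∑ u ∈ univ with ¬p u, (g (σ u) - g u) := by
  have htel : ∑ u, (g u - g (σ u)) = 0 := by
    rw [sum_sub_distrib, Equiv.sum_comp σ g, sub_self]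
  rw [← sum_filter_add_sum_filter_not univ p] at htel
  rw [eq_neg_of_add_eq_zero_left htel, ← sum_neg_distrib]
  simp only [neg_sub]

theorem sub_le_supOn_of_card_eq [DecidableEq ι] {S : Set (ι → ℤ)} {x : ι → ℤ}
    (hx : ∀ I J : Finset ι, Disjoint I J → #I = #J →
      ((∑ j ∈ J, x j - ∑ i ∈ I, x i : ℤ) : WithTop ℤ) ≤
        supOn S fun w => ∑ j ∈ J, w j - ∑ i ∈ I, w i)
    {I J : Finset ι} (h : #I = #J) :
    ((∑ j ∈ J, x j - ∑ i ∈ I, x i : ℤ) : WithTop ℤ) ≤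
      supOn S fun w => ∑ j ∈ J, w j - ∑ i ∈ I, w i := by
  simpa only [sum_sdiff_sub_sum_sdiff] using
    hx (I \ J) (J \ I) disjoint_sdiff_sdiff (card_sdiff_comm h)

/-- For L-convex `S₁`, `S₂`, the bounds `y i - y j ≤ splitBound S₁ S₂ x i j` for all `i`, `j`
say exactly that `y ∈ S₁` and `x - y ∈ S₂`. -/
noncomputable def splitBound (S₁ S₂ : Set (ι → ℤ)) (x : ι → ℤ) (i j : ι) : WithTop ℤ :=
  min (supOn S₁ fun w => w i - w j)
    ((supOn S₂ fun w => w j - w i) + ((x i - x j : ℤ) : WithTop ℤ))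

/-- If `B` is the set of `u` where the `S₂`-branch of the minimum is active, telescoping along
`σ` turns the `S₁`-branches into the same functional `w(σ B) - w(B)`, which `x` obeys since
`#(σ B) = #B`. -/
theorem sum_splitBound_perm_nonneg [Fintype ι] {S₁ S₂ : Set (ι → ℤ)} (h₁ : S₁.Nonempty)
    (h₂ : S₂.Nonempty) {x : ι → ℤ}
    (hx : ∀ I J : Finset ι, #I = #J → ((∑ j ∈ J, x j - ∑ i ∈ I, x i : ℤ) : WithTop ℤ) ≤
      supOn (S₁ + S₂) fun w => ∑ j ∈ J, w j - ∑ i ∈ I, w i)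
    (σ : Equiv.Perm ι) : 0 ≤ ∑ u, splitBound S₁ S₂ x u (σ u) := by
  classical
  set a : ι → WithTop ℤ := fun u => supOn S₁ fun w => w u - w (σ u)
  set b : ι → WithTop ℤ := fun u => supOn S₂ fun w => w (σ u) - w u
  set p : ι → Prop := fun u => a u ≤ b u + ((x u - x (σ u) : ℤ) : WithTop ℤ)
  set A := univ.filter p
  set B := univ.filter fun u => ¬p u
  have hsum : ∑ u, splitBound S₁ S₂ x u (σ u) =
      (∑ u ∈ A, a u + ∑ u ∈ B, b u) + ((∑ u ∈ B, (x u - x (σ u)) : ℤ) : WithTop ℤ) := by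
    simp only [splitBound, min_def, sum_ite, sum_add_distrib, WithTop.coe_sum, add_assoc]
    rfl
  have hshift : ∀ s : ι → ℤ,
      ∑ j ∈ B.map σ.toEmbedding, s j - ∑ i ∈ B, s i = ∑ u ∈ B, (s (σ u) - s u) := fun s => by
    rw [sum_map, sum_sub_distrib]
    rfl
  have hbound : ((∑ u ∈ B, (x (σ u) - x u) : ℤ) : WithTop ℤ) ≤
      ∑ u ∈ A, a u + ∑ u ∈ B, b u := by
    rw [← hshift]
    refine (hx _ _ (card_map _).symm).trans (supOn_le (h₁.add h₂) ?_)
    rintro _ ⟨y, hy, z, hz, rfl⟩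
    rw [hshift, show ∑ u ∈ B, ((y + z) (σ u) - (y + z) u) =
        ∑ u ∈ A, (y u - y (σ u)) + ∑ u ∈ B, (z (σ u) - z u) by
      rw [sum_filter_sub_perm_eq σ y p, ← sum_add_distrib]
      simp only [Pi.add_apply]
      exact sum_congr rfl fun u _ => by ring]
    push_cast
    exact add_le_add (sum_le_sum fun u _ => le_supOn hy) (sum_le_sum fun u _ => le_supOn hz)
  rw [hsum, ← WithTop.coe_zero, ← WithTop.coe_sub_le_iff_le_add, zero_sub, ← sum_neg_distrib]
  simpa only [neg_sub] using hbound

end Splitting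

theorem mem_add_of_forall_sub_le_supOn {n : ℕ} {S₁ S₂ : Set (Fin n → ℤ)}
    (h₁ : IsLConvexSet S₁) (h₂ : IsLConvexSet S₂) {x : Fin n → ℤ}
    (hx : ∀ I J : Finset (Fin n), Disjoint I J → #I = #J →
      ((∑ j ∈ J, x j - ∑ i ∈ I, x i : ℤ) : WithTop ℤ) ≤
        supOn (S₁ + S₂) fun w => ∑ j ∈ J, w j - ∑ i ∈ I, w i) :
    x ∈ S₁ + S₂ := by
  have hdiag : ∀ u, splitBound S₁ S₂ x u u ≤ 0 := fun u =>
    (min_le_left _ _).trans (supOn_le h₁.1 fun w _ => by simp)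
  obtain ⟨y, hy⟩ := exists_potential_of_sum_perm_nonneg hdiag
    (sum_splitBound_perm_nonneg h₁.1 h₂.1 fun _ _ => sub_le_supOn_of_card_eq hx)
  have hy₁ : y ∈ S₁ := h₁.mem_of_forall_sub_le_supOn fun i j => (hy i j).trans (min_le_left _ _)
  have hy₂ : x - y ∈ S₂ := h₂.mem_of_forall_sub_le_supOn fun i j => by
    rw [show (x - y) i - (x - y) j = (y j - y i) - (x j - x i) by simp only [Pi.sub_apply]; ring,
      WithTop.coe_sub_le_iff_le_add]
    exact (hy j i).trans (min_le_right _ _)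
  simpa using Set.add_mem_add hy₁ hy₂

/-- Polyhedral description of an L₂-convex set: there are bounds
`γ I J ∈ ℤ ∪ {+∞}` for disjoint `I J` with `|I| = |J|` such that
`S = {x : x(J) - x(I) ≤ γ I J for all such I, J}`. -/
theorem polyhedral_description_of_L2_convex_set {n : ℕ} (S : Set (Fin n → ℤ))
    (hS : IsL2ConvexSet S) :
    ∃ γ : Finset (Fin n) → Finset (Fin n) → WithTop ℤ,
      S = {x : Fin n → ℤ | ∀ I J : Finset (Fin n), Disjoint I J → I.card = J.card →
        (((∑ j ∈ J, x j) - ∑ i ∈ I, x i : ℤ) : WithTop ℤ) ≤ γ I J} := by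
  obtain ⟨S₁, S₂, h₁, h₂, rfl⟩ := hS
  refine ⟨fun I J => supOn (S₁ + S₂) fun w => ∑ j ∈ J, w j - ∑ i ∈ I, w i, ?_⟩
  ext x
  exact ⟨fun hx _ _ _ _ => le_supOn hx, mem_add_of_forall_sub_le_supOn h₁ h₂⟩
end

section
/- If P ⊆ ℝ^n is an L₂-convex polyhedron, then there exist values γ_{I,J} ∈ ℝ ∪ {+∞}, indexed by pairs of disjoint subsets I, J of N = {1,…,n} with |I| = |J|, such that P = {x ∈ ℝ^n : x(J) − x(I) ≤ γ_{I,J} for all disjoint I, J ⊆ N with |I| = |J|}. -/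
open Pointwise

/-- A polyhedron in `ℝⁿ` is the solution set of a finite system of linear
inequalities. -/
def IsPolyhedron {n : ℕ} (P : Set (Fin n → ℝ)) : Prop :=
  ∃ (m : ℕ) (A : Fin m → Fin n → ℝ) (b : Fin m → ℝ),
    P = {x | ∀ i, ∑ j, A i j * x j ≤ b i}

/-- A nonempty polyhedron `P ⊆ ℝⁿ` is L-convex if it is closed under
componentwise max/min and under translation by real multiples of `𝟏`. -/
def IsLConvexPoly {n : ℕ} (P : Set (Fin n → ℝ)) : Prop :=
  IsPolyhedron P ∧ P.Nonempty ∧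
  (∀ x ∈ P, ∀ y ∈ P, x ⊔ y ∈ P ∧ x ⊓ y ∈ P) ∧
  (∀ x ∈ P, ∀ μ : ℝ, (x + fun _ => μ) ∈ P)

/-- A polyhedron is L₂-convex if it is the Minkowski sum of two L-convex
polyhedra. -/
def IsL2ConvexPoly {n : ℕ} (P : Set (Fin n → ℝ)) : Prop :=
  IsPolyhedron P ∧
  ∃ P₁ P₂ : Set (Fin n → ℝ), IsLConvexPoly P₁ ∧ IsLConvexPoly P₂ ∧ P = P₁ + P₂

/-!
Take `γ I J` to be the supremum of `x(J) - x(I)` over `P = P₁ + P₂`. An L-convex polyhedron is cut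
out by its bounds on the differences `x j - x i`, so for a given `y` the conditions `p ∈ P₁` and
`y - p ∈ P₂` form a system of difference constraints `p j - p i ≤ c (i, j)`. Such a system is
feasible unless some family of vertex-disjoint cycles has negative total weight. Summing the
constraints along that family, the arcs whose bound comes from `P₂` contribute `x(J) - x(I)`,
with `J` the tails that are not heads and `I` the heads that are not tails (so `I` and `J` are
disjoint of equal size), and the negative weight says exactly that `y` violates `x(J) - x(I) ≤ γ I J`.
-/

open Finset

namespace List

variable {V : Type*}

def arcs (l : List V) : List (V × V) := l.zip l.tail

@[simp]
lemma arcs_singleton (a : V) : [a].arcs = [] := rfl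

@[simp]
lemma arcs_cons_cons (a b : V) (l : List V) : (a :: b :: l).arcs = (a, b) :: (b :: l).arcs := rfl

lemma arcs_append_cons (X : List V) (a : V) (Y : List V) :
    (X ++ a :: Y).arcs = (X ++ [a]).arcs ++ (a :: Y).arcs := by
  induction X with
  | nil => simp
  | cons b X ih => cases X <;> simp_all

lemma arcs_cons_append_singleton (a : V) (X : List V) :
    (a :: X ++ [a]).arcs = (a :: X).zip (X ++ [a]) := by
  simpa [arcs] using zip_append (l₁ := a :: X) (r₁ := [a]) (l₂ := X ++ [a]) (r₂ := []) (by simp)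

end List

lemma exists_nodup_walk_le_of_cycle_nonneg {V : Type*} {E : Set (V × V)} {c : V × V → ℝ}
    (hcycle : ∀ a X, (a :: X).Nodup → (∀ e ∈ (a :: X ++ [a]).arcs, e ∈ E) →
      0 ≤ ((a :: X ++ [a]).arcs.map c).sum)
    {a : V} {l : List V} (hl : l.Nodup) (hE : ∀ e ∈ (a :: l).arcs, e ∈ E) :
    ∃ Y, (a :: Y).Nodup ∧ (∀ e ∈ (a :: Y).arcs, e ∈ E) ∧
      ((a :: Y).arcs.map c).sum ≤ ((a :: l).arcs.map c).sum := by
  by_cases ha : a ∈ l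
  · obtain ⟨X, Y, rfl⟩ := List.append_of_mem ha
    have hsplit : (a :: (X ++ a :: Y)).arcs = (a :: X ++ [a]).arcs ++ (a :: Y).arcs :=
      List.arcs_append_cons (a :: X) a Y
    have hmid := List.nodup_middle.1 hl
    have hX : (a :: X).Nodup := hmid.sublist ((List.sublist_append_left X Y).cons_cons a)
    rw [hsplit] at hE ⊢
    refine ⟨Y, hl.sublist (List.sublist_append_right X _),
      fun e he => hE e (List.mem_append_right _ he), ?_⟩
    rw [List.map_append, List.sum_append]
    linarith [hcycle a X hX fun e he => hE e (List.mem_append_left _ he)]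
  · exact ⟨l, List.nodup_cons.2 ⟨ha, hl⟩, hE, le_rfl⟩

section CycleFamilies

variable {V : Type*} [DecidableEq V]

/-- `F` is the arc set of vertex-disjoint directed cycles (loops allowed): the graph of a
permutation of a set of vertices. -/
def IsCycleFamily (F : Finset (V × V)) : Prop :=
  Set.InjOn Prod.fst (F : Set (V × V)) ∧ Set.InjOn Prod.snd (F : Set (V × V)) ∧
    F.image Prod.fst = F.image Prod.snd

lemma IsCycleFamily.sum_snd_sub_fst {F : Finset (V × V)} (hF : IsCycleFamily F)
    {M : Type*} [AddCommGroup M] (p : V → M) : ∑ e ∈ F, (p e.2 - p e.1) = 0 := by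
  rw [sum_sub_distrib, ← sum_image hF.2.1, ← sum_image hF.1, hF.2.2, sub_self]

lemma exists_disjoint_card_eq_sum_fst_sub_snd {A : Finset (V × V)}
    (h₁ : Set.InjOn Prod.fst (A : Set (V × V))) (h₂ : Set.InjOn Prod.snd (A : Set (V × V)))
    (M : Type*) [AddCommGroup M] :
    ∃ I J : Finset V, Disjoint I J ∧ #I = #J ∧
      ∀ x : V → M, ∑ e ∈ A, (x e.1 - x e.2) = ∑ j ∈ J, x j - ∑ i ∈ I, x i := by
  refine ⟨A.image Prod.snd \ A.image Prod.fst, A.image Prod.fst \ A.image Prod.snd,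
    disjoint_sdiff_sdiff, card_sdiff_comm ?_, fun x => ?_⟩
  · rw [card_image_of_injOn h₂, card_image_of_injOn h₁]
  · rw [sum_sdiff_sub_sum_sdiff, sum_image h₁, sum_image h₂, sum_sub_distrib]

lemma isCycleFamily_toFinset_arcs {a : V} {X : List V} (h : (a :: X).Nodup) :
    IsCycleFamily (a :: X ++ [a]).arcs.toFinset ∧ (a :: X ++ [a]).arcs.Nodup := by
  have hfst : ((a :: X ++ [a]).arcs.map Prod.fst) = a :: X := by
    rw [List.arcs_cons_append_singleton, List.map_fst_zip (by simp)]
  have hsnd : ((a :: X ++ [a]).arcs.map Prod.snd) = X ++ [a] := by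
    rw [List.arcs_cons_append_singleton, List.map_snd_zip (by simp)]
  have hfst' : ((a :: X ++ [a]).arcs.map Prod.fst).Nodup := by
    rw [hfst]; exact h
  have hsnd' : ((a :: X ++ [a]).arcs.map Prod.snd).Nodup := by
    rw [hsnd]; exact (List.perm_append_singleton a X).nodup_iff.2 h
  have himage (f : V × V → V) :
      (a :: X ++ [a]).arcs.toFinset.image f = ((a :: X ++ [a]).arcs.map f).toFinset := by
    ext; simp
  refine ⟨⟨fun e he e' he' => ?_, fun e he e' he' => ?_, ?_⟩, hfst'.of_map _⟩
  · exact List.inj_on_of_nodup_map hfst' (List.mem_toFinset.1 he) (List.mem_toFinset.1 he')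
  · exact List.inj_on_of_nodup_map hsnd' (List.mem_toFinset.1 he) (List.mem_toFinset.1 he')
  · rw [himage, himage, hfst, hsnd]
    exact List.toFinset_eq_of_perm _ _ (List.perm_append_singleton a X).symm

theorem exists_potential_of_cycleFamily_nonneg [Fintype V] {E : Set (V × V)} {c : V × V → ℝ}
    (hc : ∀ F : Finset (V × V), ↑F ⊆ E → IsCycleFamily F → 0 ≤ ∑ e ∈ F, c e) :
    ∃ p : V → ℝ, ∀ e ∈ E, p e.2 - p e.1 ≤ c e := by
  have hcycle (a : V) (X : List V) (h : (a :: X).Nodup)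
      (hE : ∀ e ∈ (a :: X ++ [a]).arcs, e ∈ E) : 0 ≤ ((a :: X ++ [a]).arcs.map c).sum := by
    obtain ⟨hF, hnd⟩ := isCycleFamily_toFinset_arcs h
    rw [← List.sum_toFinset c hnd]
    exact hc _ (fun e he => hE e (List.mem_toFinset.1 he)) hF
  -- `-p v` is the least weight of a simple walk out of `v`.
  set W : V → Set ℝ := fun v => (fun l => ((v :: l).arcs.map c).sum) ''
    {l | (v :: l).Nodup ∧ ∀ e ∈ (v :: l).arcs, e ∈ E}
  have hfin (v : V) : (W v).Finite :=
    ((List.finite_length_le V (Fintype.card V)).subset fun l hl =>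
      (hl.1.sublist (List.sublist_cons_self v l)).length_le_card).image _
  have hne (v : V) : (W v).Nonempty := ⟨_, [], by simp, rfl⟩
  refine ⟨fun v => -sInf (W v), ?_⟩
  rintro ⟨a, b⟩ hab
  obtain ⟨l, ⟨hl, hlE⟩, hlW⟩ := (hne b).csInf_mem (hfin b)
  obtain ⟨Y, hY, hYE, hYle⟩ := exists_nodup_walk_le_of_cycle_nonneg hcycle hl
    (a := a) (fun e he => by
      rw [List.arcs_cons_cons, List.mem_cons] at he
      exact he.elim (· ▸ hab) (hlE e))
  have hWa := csInf_le (hfin a).bddBelow ⟨Y, ⟨hY, hYE⟩, rfl⟩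
  rw [List.arcs_cons_cons, List.map_cons, List.sum_cons] at hYle
  dsimp only at hlW hWa ⊢
  linarith

lemma exists_separating_of_isCycleFamily {P₁ P₂ : Set (V → ℝ)}
    {y : V → ℝ} {F : Finset (V × V)} (hF : IsCycleFamily F) {r : V × V → ℝ}
    (hr : ∀ e ∈ F, (∀ p ∈ P₁, p e.2 - p e.1 ≤ r e) ∨
      ∀ q ∈ P₂, q e.1 - q e.2 + (y e.2 - y e.1) ≤ r e)
    (hneg : ∑ e ∈ F, r e < 0) :
    ∃ I J : Finset V, Disjoint I J ∧ #I = #J ∧ ∃ K : ℝ,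
      (∀ x ∈ P₁ + P₂, ∑ j ∈ J, x j - ∑ i ∈ I, x i ≤ K) ∧ K < ∑ j ∈ J, y j - ∑ i ∈ I, y i := by
  classical
  set A := F.filter fun e => ¬ ∀ p ∈ P₁, p e.2 - p e.1 ≤ r e
  have hAF : (A : Set (V × V)) ⊆ F := coe_subset.2 (filter_subset _ _)
  obtain ⟨I, J, hIJ, hcard, hsum⟩ :=
    exists_disjoint_card_eq_sum_fst_sub_snd (hF.1.mono hAF) (hF.2.1.mono hAF) ℝ
  refine ⟨I, J, hIJ, hcard, ∑ e ∈ F, r e + ∑ e ∈ A, (y e.1 - y e.2), ?_,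
    by rw [← hsum]; linarith⟩
  rintro _ ⟨p, hp, q, hq, rfl⟩
  have harc : ∀ e ∈ F, p e.2 - p e.1 +
      (if e ∈ A then ((p + q) e.1 - (p + q) e.2) - (y e.1 - y e.2) else 0) ≤ r e := by
    intro e he
    by_cases heA : e ∈ A
    · have := ((hr e he).resolve_left (mem_filter.1 heA).2) q hq
      simp only [heA, if_true, Pi.add_apply]
      linarith
    · have := not_not.1 fun h => heA (mem_filter.2 ⟨he, h⟩)
      simp only [heA, if_false]
      linarith [this p hp]
  have htotal := sum_le_sum harc
  rw [sum_add_distrib, hF.sum_snd_sub_fst, sum_ite_mem, inter_eq_right.2 (filter_subset _ _),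
    sum_sub_distrib] at htotal
  rw [← hsum]
  linarith

end CycleFamilies

lemma IsPolyhedron.isClosed {n : ℕ} {Q : Set (Fin n → ℝ)} (h : IsPolyhedron Q) : IsClosed Q := by
  obtain ⟨m, A, b, rfl⟩ := h
  simp only [Set.ofPred_forall]
  exact isClosed_iInter fun i => isClosed_le (by fun_prop) continuous_const

lemma exists_mem_le_add_of_forall_exists_sub_le {ι : Type*} [Fintype ι] [Nonempty ι]
    {Q : Set (ι → ℝ)} (hsup : ∀ x ∈ Q, ∀ y ∈ Q, x ⊔ y ∈ Q) (hinf : ∀ x ∈ Q, ∀ y ∈ Q, x ⊓ y ∈ Q)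
    (htr : ∀ x ∈ Q, ∀ μ : ℝ, (x + fun _ => μ) ∈ Q) {y : ι → ℝ} {δ : ℝ}
    (hy : ∀ i j, ∃ w ∈ Q, y j - y i - δ ≤ w j - w i) :
    ∃ z ∈ Q, y ≤ z ∧ z ≤ y + fun _ => δ := by
  choose w hwQ hw using hy
  set u : ι → ι → ι → ℝ := fun i j => w i j + fun _ => y j - w i j j
  have huj (i j : ι) : u i j j = y j := by simp [u]
  have hui (i j : ι) : u i j i ≤ y i + δ := by
    have := hw i j
    simp only [u, Pi.add_apply]
    linarith
  set s : ι → ι → ℝ := fun j => univ.inf' univ_nonempty fun i => u i j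
  have hsQ (j : ι) : s j ∈ Q := inf'_mem Q hinf _ _ _ fun i _ => htr _ (hwQ i j) _
  refine ⟨univ.sup' univ_nonempty s, sup'_mem Q hsup _ _ _ fun j _ => hsQ j,
    fun k => ?_, fun k => ?_⟩
  · calc y k = s k k := by simp [s, Finset.inf'_apply, huj]
      _ ≤ _ := by rw [Finset.sup'_apply]; exact le_sup' (fun j => s j k) (mem_univ k)
  · rw [Finset.sup'_apply]
    refine sup'_le _ _ fun j _ => ?_
    calc s j k ≤ u k j k := by
          simp only [s, Finset.inf'_apply]; exact inf'_le (fun i => u i j k) (mem_univ k)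
      _ ≤ y k + δ := hui k j

lemma IsLConvexPoly.mem_of_forall_lt_exists {n : ℕ} {Q : Set (Fin n → ℝ)} (hQ : IsLConvexPoly Q)
    {y : Fin n → ℝ} (hy : ∀ i j, ∀ t < y j - y i, ∃ w ∈ Q, t < w j - w i) : y ∈ Q := by
  obtain ⟨hpoly, ⟨x₀, hx₀⟩, hlat, htr⟩ := hQ
  cases isEmpty_or_nonempty (Fin n)
  · exact Subsingleton.elim x₀ y ▸ hx₀
  rw [← hpoly.isClosed.closure_eq, Metric.mem_closure_iff]
  intro ε hε
  obtain ⟨z, hzQ, hyz, hzy⟩ := exists_mem_le_add_of_forall_exists_sub_le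
    (fun x hx y hy => (hlat x hx y hy).1) (fun x hx y hy => (hlat x hx y hy).2) htr
    (y := y) (δ := ε / 2) fun i j => (hy i j _ (by linarith)).imp fun _ hw => ⟨hw.1, hw.2.le⟩
  have hdist : dist y z ≤ ε / 2 := by
    refine (dist_pi_le_iff (by positivity)).2 fun k => ?_
    rw [Real.dist_eq, abs_le]
    have hzy' : z k ≤ y k + ε / 2 := hzy k
    constructor <;> linarith [hyz k]
  exact ⟨z, hzQ, by linarith⟩

theorem exists_separating_of_notMem_add {n : ℕ} {P₁ P₂ : Set (Fin n → ℝ)}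
    (h₁ : IsLConvexPoly P₁) (h₂ : IsLConvexPoly P₂) {y : Fin n → ℝ} (hy : y ∉ P₁ + P₂) :
    ∃ I J : Finset (Fin n), Disjoint I J ∧ #I = #J ∧ ∃ K : ℝ,
      (∀ x ∈ P₁ + P₂, ∑ j ∈ J, x j - ∑ i ∈ I, x i ≤ K) ∧ K < ∑ j ∈ J, y j - ∑ i ∈ I, y i := by
  set f₁ : Fin n × Fin n → (Fin n → ℝ) → WithTop ℝ := fun e p => ↑(p e.2 - p e.1)
  set f₂ : Fin n × Fin n → (Fin n → ℝ) → WithTop ℝ :=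
    fun e q => ↑(q e.1 - q e.2 + (y e.2 - y e.1))
  have hγ₁ (e) : IsLUB (f₁ e '' P₁) (sSup (f₁ e '' P₁)) := WithTop.isLUB_sSup' (h₁.2.1.image _)
  have hγ₂ (e) : IsLUB (f₂ e '' P₂) (sSup (f₂ e '' P₂)) := WithTop.isLUB_sSup' (h₂.2.1.image _)
  set c : Fin n × Fin n → WithTop ℝ := fun e => min (sSup (f₁ e '' P₁)) (sSup (f₂ e '' P₂))
  by_cases hcyc : ∀ F : Finset (Fin n × Fin n), ↑F ⊆ {e | c e ≠ ⊤} → IsCycleFamily F →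
      0 ≤ ∑ e ∈ F, (c e).untop₀
  · obtain ⟨p, hp⟩ := exists_potential_of_cycleFamily_nonneg hcyc
    have hpc (e) : ((p e.2 - p e.1 : ℝ) : WithTop ℝ) ≤ c e := by
      by_cases he : c e = ⊤
      · exact he ▸ le_top
      · rw [← WithTop.coe_untop₀_of_ne_top he]; exact WithTop.coe_le_coe.2 (hp e he)
    refine absurd (Set.mem_add.2 ⟨p, h₁.mem_of_forall_lt_exists fun i j t ht => ?_,
      y - p, h₂.mem_of_forall_lt_exists fun i j t ht => ?_, add_sub_cancel p y⟩) hy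
    · obtain ⟨_, ⟨w, hw, rfl⟩, hlt⟩ := (lt_isLUB_iff (hγ₁ (i, j))).1
        ((WithTop.coe_lt_coe.2 ht).trans_le ((hpc (i, j)).trans (min_le_left _ _)))
      exact ⟨w, hw, WithTop.coe_lt_coe.1 hlt⟩
    · have ht' : t + (y i - y j) < p i - p j := by simp only [Pi.sub_apply] at ht; linarith
      obtain ⟨_, ⟨w, hw, rfl⟩, hlt⟩ := (lt_isLUB_iff (hγ₂ (j, i))).1
        ((WithTop.coe_lt_coe.2 ht').trans_le ((hpc (j, i)).trans (min_le_right _ _)))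
      exact ⟨w, hw, by have := WithTop.coe_lt_coe.1 hlt; linarith⟩
  · push Not at hcyc
    obtain ⟨F, hFE, hF, hneg⟩ := hcyc
    refine exists_separating_of_isCycleFamily hF (fun e he => ?_) hneg
    have hce : c e = ↑(c e).untop₀ := (WithTop.coe_untop₀_of_ne_top (hFE he)).symm
    rcases min_choice (sSup (f₁ e '' P₁)) (sSup (f₂ e '' P₂)) with h | h
    · exact .inl fun p hp => WithTop.coe_le_coe.1 <|
        (hγ₁ e).1 ⟨p, hp, rfl⟩ |>.trans (h.symm.trans hce).le
    · exact .inr fun q hq => WithTop.coe_le_coe.1 <|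
        (hγ₂ e).1 ⟨q, hq, rfl⟩ |>.trans (h.symm.trans hce).le

/-- Polyhedral description of an L₂-convex polyhedron: there are bounds
`γ I J ∈ ℝ ∪ {+∞}` for disjoint `I J` with `|I| = |J|` such that
`P = {x : x(J) - x(I) ≤ γ I J for all such I, J}`. -/
theorem polyhedral_description_of_L2_convex_polyhedron {n : ℕ} (P : Set (Fin n → ℝ))
    (hP : IsL2ConvexPoly P) :
    ∃ γ : Finset (Fin n) → Finset (Fin n) → WithTop ℝ,
      P = {x : Fin n → ℝ | ∀ I J : Finset (Fin n), Disjoint I J → I.card = J.card →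
        (((∑ j ∈ J, x j) - ∑ i ∈ I, x i : ℝ) : WithTop ℝ) ≤ γ I J} := by
  obtain ⟨-, P₁, P₂, h₁, h₂, rfl⟩ := hP
  set f : Finset (Fin n) → Finset (Fin n) → (Fin n → ℝ) → WithTop ℝ :=
    fun I J x => ↑((∑ j ∈ J, x j) - ∑ i ∈ I, x i)
  have hγ (I J) : IsLUB (f I J '' (P₁ + P₂)) (sSup (f I J '' (P₁ + P₂))) :=
    WithTop.isLUB_sSup' ((h₁.2.1.add h₂.2.1).image _)
  refine ⟨fun I J => sSup (f I J '' (P₁ + P₂)), Set.Subset.antisymm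
    (fun x hx I J _ _ => (hγ I J).1 ⟨x, hx, rfl⟩) fun y hy => ?_⟩
  by_contra hyP
  obtain ⟨I, J, hIJ, hcard, K, hK, hKy⟩ := exists_separating_of_notMem_add h₁ h₂ hyP
  have hyK := (hy I J hIJ hcard).trans ((hγ I J).2 (by
    rintro _ ⟨x, hx, rfl⟩
    exact WithTop.coe_le_coe.2 (hK x hx)))
  exact (WithTop.coe_le_coe.1 hyK).not_gt hKy
end

section
/- Let N = {1,…,n}, let E₁, E₂ ⊆ {(i,j) ∈ N × N : i ≠ j}, and let γ⁽¹⁾ : E₁ → ℝ and γ⁽²⁾ : E₂ → ℝ. Suppose that for k = 1, 2 the polyhedron P_k = {y ∈ ℝ^n : y_j − y_i ≤ γ⁽ᵏ⁾_{ij} for all (i,j) ∈ E_k} is nonempty, and set P = P₁ + P₂ (Minkowski sum). For disjoint I, J ⊆ N with |I| = |J| and for k = 1, 2, define λ(I,J;G_k) ∈ ℝ ∪ {+∞} as the infimum of Σ_{(i,j)∈E_k} γ⁽ᵏ⁾_{ij} ξ_{ij} over all ξ : E_k → ℝ_{≥0} satisfying Σ_{(i,j)∈E_k} ξ_{ij}(χ_j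 − χ_i) = χ_J − χ_I (with infimum of the empty set equal to +∞). Then for all disjoint I, J ⊆ N with |I| = |J|: sup{x(J) − x(I) : x ∈ P} = λ(I,J;G₁) + λ(I,J;G₂), as an equality in ℝ ∪ {+∞}. -/
/-!
A linear functional `f` satisfies `sup f(P₁ + P₂) = sup f(P₁) + sup f(P₂)`, so it suffices to show
`sup {x(J) - x(I) : x ∈ P_k} = λ(I,J;G_k)`. This is linear programming duality: `λ(I,J;G_k)` is
the value of the dual of maximizing `(χ_J - χ_I) ⬝ x` over `P_k`. Weak duality gives `≤`. For `≥`,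
Farkas' lemma applied to the homogenized system shows that below the dual optimum there is either
a better point of `P_k` or, `P_k` being nonempty, an improving recession direction.
-/

open Pointwise

/-- `λ(I,J;G)`: the optimal value (in `ℝ ∪ {+∞}`, with `sInf ∅ = ⊤`) of the
linear program `min Σ_{e ∈ E} γ_e ξ_e` over `ξ ≥ 0` with
`Σ_{e ∈ E} ξ_e (χ_{e.2} - χ_{e.1}) = χ_J - χ_I`; combinatorially, the minimum
total `γ`-length of `|I|` paths in `G = (N, E)` connecting `I` to `J` and
covering `I` and `J`. -/
noncomputable def lambdaLP {n : ℕ} (E : Finset (Fin n × Fin n))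
    (γ : Fin n × Fin n → ℝ) (I J : Finset (Fin n)) : EReal :=
  sInf {v : EReal | ∃ ξ : Fin n × Fin n → ℝ,
    (∀ e, 0 ≤ ξ e) ∧
    (∀ l : Fin n,
      (∑ e ∈ E, ξ e * (((if e.2 = l then 1 else 0) : ℝ) -
        ((if e.1 = l then 1 else 0) : ℝ))) =
      ((if l ∈ J then 1 else 0) : ℝ) - ((if l ∈ I then 1 else 0) : ℝ)) ∧
    v = ((∑ e ∈ E, γ e * ξ e : ℝ) : EReal)}

open Matrix

section Farkas

variable {ι δ : Type*}

theorem exists_nonneg_sum_insert_smul [DecidableEq δ] {S : Finset δ} {d₀ : δ} (hd₀ : d₀ ∉ S)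
    (g : δ → ι → ℝ) {ξ : δ → ℝ} (hξ : ∀ d, 0 ≤ ξ d) {μ : ℝ} (hμ : 0 ≤ μ) :
    ∃ ξ' : δ → ℝ, (∀ d, 0 ≤ ξ' d) ∧
      ∑ d ∈ insert d₀ S, ξ' d • g d = μ • g d₀ + ∑ d ∈ S, ξ d • g d := by
  refine ⟨Function.update ξ d₀ μ, fun d => ?_, ?_⟩
  · rcases eq_or_ne d d₀ with rfl | hd
    · simpa using hμ
    · simpa [hd] using hξ d
  · rw [Finset.sum_insert hd₀, Function.update_self]
    congr 1
    exact Finset.sum_congr rfl fun d hd => by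
      rw [Function.update_of_ne (ne_of_mem_of_not_mem hd hd₀)]

variable [Fintype ι]

theorem sub_div_smul_dotProduct (u w x y : ι → ℝ) (p : ℝ) :
    (u - ((u ⬝ᵥ x) / p) • w) ⬝ᵥ y = u ⬝ᵥ (y - ((w ⬝ᵥ y) / p) • x) := by
  simp only [sub_dotProduct, dotProduct_sub, smul_dotProduct, dotProduct_smul, smul_eq_mul]
  ring

/-- Farkas' lemma. -/
theorem exists_nonneg_sum_smul_eq_or_exists_dotProduct_pos [DecidableEq δ] (S : Finset δ)
    (g : δ → ι → ℝ) (b : ι → ℝ) :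
    (∃ ξ : δ → ℝ, (∀ d, 0 ≤ ξ d) ∧ ∑ d ∈ S, ξ d • g d = b) ∨
      ∃ x : ι → ℝ, (∀ d ∈ S, g d ⬝ᵥ x ≤ 0) ∧ 0 < b ⬝ᵥ x := by
  induction S using Finset.induction_on generalizing g b with
  | empty =>
    by_cases hb : b = 0
    · exact .inl ⟨0, fun _ => le_rfl, by simp [hb]⟩
    · exact .inr ⟨b, by simp, by simpa using dotProduct_star_self_pos_iff.2 hb⟩
  | @insert d₀ S hd₀ ih =>
    rcases ih g b with ⟨ξ, hξ, hsum⟩ | ⟨x, hx, hbx⟩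
    · obtain ⟨ξ', hξ', hsum'⟩ := exists_nonneg_sum_insert_smul hd₀ g hξ le_rfl
      exact .inl ⟨ξ', hξ', by rw [hsum', zero_smul, zero_add, hsum]⟩
    by_cases hd₀x : g d₀ ⬝ᵥ x ≤ 0
    · exact .inr ⟨x, Finset.forall_mem_insert _ _ _ |>.2 ⟨hd₀x, hx⟩, hbx⟩
    replace hd₀x := not_le.mp hd₀x
    set p := g d₀ ⬝ᵥ x
    -- project everything onto the hyperplane `x ⬝ᵥ · = 0` along `g d₀`
    rcases ih (fun d => g d - ((g d ⬝ᵥ x) / p) • g d₀) (b - ((b ⬝ᵥ x) / p) • g d₀) with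
      ⟨ξ, hξ, hsum⟩ | ⟨y, hy, hby⟩
    · set μ := (b ⬝ᵥ x) / p - ∑ d ∈ S, ξ d * ((g d ⬝ᵥ x) / p)
      have hμ : 0 ≤ μ := by
        have : ∑ d ∈ S, ξ d * ((g d ⬝ᵥ x) / p) ≤ 0 := Finset.sum_nonpos fun d hd =>
          mul_nonpos_of_nonneg_of_nonpos (hξ d) (div_nonpos_of_nonpos_of_nonneg (hx d hd) hd₀x.le)
        have := div_pos hbx hd₀x
        linarith
      obtain ⟨ξ', hξ', hsum'⟩ := exists_nonneg_sum_insert_smul hd₀ g hξ hμ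
      refine .inl ⟨ξ', hξ', ?_⟩
      simp only [smul_sub, smul_smul, Finset.sum_sub_distrib, ← Finset.sum_smul] at hsum
      rw [hsum', sub_smul]
      linear_combination (norm := module) hsum
    · refine .inr ⟨y - ((g d₀ ⬝ᵥ y) / p) • x, Finset.forall_mem_insert _ _ _ |>.2 ⟨?_, ?_⟩, ?_⟩
      · rw [dotProduct_sub, dotProduct_smul, smul_eq_mul, div_mul_cancel₀ _ hd₀x.ne', sub_self]
      · exact fun d hd => by simpa only [sub_div_smul_dotProduct] using hy d hd
      · simpa only [sub_div_smul_dotProduct] using hby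

end Farkas

section Duality

variable {ι δ : Type*} {S : Finset δ} {a : δ → ι → ℝ} {γ : δ → ℝ} {c : ι → ℝ}

variable (S a γ c) in
/-- The value of the linear program dual to maximizing `c ⬝ᵥ x` subject to `a d ⬝ᵥ x ≤ γ d`;
it is `⊤` when the dual is infeasible. -/
noncomputable def lpDualValue : EReal :=
  sInf {v : EReal | ∃ ξ : δ → ℝ, (∀ d, 0 ≤ ξ d) ∧ ∑ d ∈ S, ξ d • a d = c ∧
    v = ((∑ d ∈ S, γ d * ξ d : ℝ) : EReal)}

theorem lpDualValue_le {ξ : δ → ℝ} (hξ : ∀ d, 0 ≤ ξ d) (hc : ∑ d ∈ S, ξ d • a d = c) :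
    lpDualValue S a γ c ≤ ((∑ d ∈ S, γ d * ξ d : ℝ) : EReal) :=
  sInf_le ⟨ξ, hξ, hc, rfl⟩

variable [Fintype ι]

theorem dotProduct_le_sum_mul {x : ι → ℝ} (hx : ∀ d ∈ S, a d ⬝ᵥ x ≤ γ d) {ξ : δ → ℝ}
    (hξ : ∀ d, 0 ≤ ξ d) (hc : ∑ d ∈ S, ξ d • a d = c) :
    c ⬝ᵥ x ≤ ∑ d ∈ S, γ d * ξ d := by
  rw [← hc, sum_dotProduct]
  refine Finset.sum_le_sum fun d hd => ?_
  rw [smul_dotProduct, smul_eq_mul, mul_comm (γ d)]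
  exact mul_le_mul_of_nonneg_left (hx d hd) (hξ d)

theorem coe_dotProduct_le_lpDualValue {x : ι → ℝ} (hx : ∀ d ∈ S, a d ⬝ᵥ x ≤ γ d) :
    ((c ⬝ᵥ x : ℝ) : EReal) ≤ lpDualValue S a γ c :=
  le_sInf fun _ ⟨_, hξ, hc, hv⟩ => hv ▸ EReal.coe_le_coe (dotProduct_le_sum_mul hx hξ hc)

theorem exists_lt_dotProduct_of_recession {y₀ x : ι → ℝ} (hy₀ : ∀ d ∈ S, a d ⬝ᵥ y₀ ≤ γ d)
    (hx : ∀ d ∈ S, a d ⬝ᵥ x ≤ 0) (hcx : 0 < c ⬝ᵥ x) (t : ℝ) :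
    ∃ y : ι → ℝ, (∀ d ∈ S, a d ⬝ᵥ y ≤ γ d) ∧ t < c ⬝ᵥ y := by
  set s := (|t - c ⬝ᵥ y₀| + 1) / (c ⬝ᵥ x)
  have hs : 0 ≤ s := by positivity
  refine ⟨y₀ + s • x, fun d hd => ?_, ?_⟩
  · rw [dotProduct_add, dotProduct_smul, smul_eq_mul]
    nlinarith [hy₀ d hd, hx d hd]
  · rw [dotProduct_add, dotProduct_smul, smul_eq_mul, div_mul_cancel₀ _ hcx.ne']
    linarith [le_abs_self (t - c ⬝ᵥ y₀)]

theorem option_elim'_dotProduct (r s : ℝ) (u v : ι → ℝ) :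
    Option.elim' r u ⬝ᵥ Option.elim' s v = r * s + u ⬝ᵥ v := by
  simp [dotProduct, Fintype.sum_option]

/-- Farkas' lemma for the homogenized system in `ℝ × ℝ^ι` (the `ℝ` factor indexed by `none`),
with generators `(γ_d, a_d)` and the slack `(1, 0)`, and target `(t, c)`. -/
theorem exists_lt_dotProduct_of_lt_lpDualValue
    (hP : {x : ι → ℝ | ∀ d ∈ S, a d ⬝ᵥ x ≤ γ d}.Nonempty) {t : ℝ}
    (ht : (t : EReal) < lpDualValue S a γ c) :
    ∃ x : ι → ℝ, (∀ d ∈ S, a d ⬝ᵥ x ≤ γ d) ∧ t < c ⬝ᵥ x := by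
  classical
  let g : Option δ → Option ι → ℝ :=
    fun o => o.elim (Option.elim' 1 0) fun d => Option.elim' (γ d) (a d)
  rcases exists_nonneg_sum_smul_eq_or_exists_dotProduct_pos S.insertNone g (Option.elim' t c) with
    ⟨ξ, hξ, hsum⟩ | ⟨z, hz, htz⟩
  · rw [Finset.sum_insertNone] at hsum
    have hval : ξ none + ∑ d ∈ S, γ d * ξ (some d) = t := by
      simpa [g, Finset.sum_apply, mul_comm] using congrFun hsum none
    have hc : ∑ d ∈ S, ξ (some d) • a d = c := funext fun i => by
      simpa [g, Finset.sum_apply] using congrFun hsum (some i)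
    have := (lpDualValue_le (γ := γ) (fun d => hξ (some d)) hc).trans_lt' ht
    exact absurd (EReal.coe_lt_coe_iff.1 this) (by linarith [hξ none])
  · rw [← Option.elim'_none_some z] at hz htz
    set x₀ := z none
    set x := z ∘ some
    have hx₀ : x₀ ≤ 0 := by
      simpa [g, option_elim'_dotProduct] using hz none (Finset.mem_insertNone.2 (by simp))
    have hxd : ∀ d ∈ S, γ d * x₀ + a d ⬝ᵥ x ≤ 0 := fun d hd => by
      simpa [g, option_elim'_dotProduct] using hz (some d) (Finset.mem_insertNone.2 (by simpa))
    rw [option_elim'_dotProduct] at htz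
    rcases hx₀.lt_or_eq with hx₀ | hx₀
    · refine ⟨(-x₀)⁻¹ • x, fun d hd => ?_, ?_⟩
      · rw [dotProduct_smul, smul_eq_mul, inv_mul_le_iff₀ (neg_pos.2 hx₀)]
        linarith [hxd d hd]
      · rw [dotProduct_smul, smul_eq_mul, lt_inv_mul_iff₀ (neg_pos.2 hx₀)]
        linarith
    · obtain ⟨y₀, hy₀⟩ := hP
      exact exists_lt_dotProduct_of_recession hy₀ (fun d hd => by simpa [hx₀] using hxd d hd)
        (by simpa [hx₀] using htz) t

theorem sSup_image_dotProduct_eq_lpDualValue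
    (hP : {x : ι → ℝ | ∀ d ∈ S, a d ⬝ᵥ x ≤ γ d}.Nonempty) :
    sSup ((fun x => ((c ⬝ᵥ x : ℝ) : EReal)) '' {x | ∀ d ∈ S, a d ⬝ᵥ x ≤ γ d}) =
      lpDualValue S a γ c := by
  refine le_antisymm (sSup_le (Set.forall_mem_image.2 fun x hx => coe_dotProduct_le_lpDualValue hx))
    (le_of_forall_lt fun u hu => ?_)
  obtain ⟨t, hut, ht⟩ := EReal.exists_between_coe_real hu
  obtain ⟨x, hx, htx⟩ := exists_lt_dotProduct_of_lt_lpDualValue hP ht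
  exact hut.trans ((EReal.coe_lt_coe htx).trans_le (le_sSup (Set.mem_image_of_mem _ hx)))

end Duality

theorem EReal.sSup_image_add_of_map_add {M : Type*} [Add M] (f : M → EReal)
    (hf : ∀ x y, f (x + y) = f x + f y) (A B : Set M) :
    sSup (f '' (A + B)) = sSup (f '' A) + sSup (f '' B) := by
  refine le_antisymm (sSup_le ?_) (EReal.add_le_of_forall_lt fun u hu v hv => ?_)
  · rintro _ ⟨_, ⟨x, hx, y, hy, rfl⟩, rfl⟩
    rw [hf]
    exact add_le_add (le_sSup (Set.mem_image_of_mem f hx)) (le_sSup (Set.mem_image_of_mem f hy))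
  · obtain ⟨_, ⟨x, hx, rfl⟩, hux⟩ := lt_sSup_iff.1 hu
    obtain ⟨_, ⟨y, hy, rfl⟩, hvy⟩ := lt_sSup_iff.1 hv
    calc u + v ≤ f x + f y := add_le_add hux.le hvy.le
      _ = f (x + y) := (hf x y).symm
      _ ≤ sSup (f '' (A + B)) := le_sSup (Set.mem_image_of_mem f (Set.add_mem_add hx hy))

section Graph

variable {n : ℕ}

def edgeVec (e : Fin n × Fin n) : Fin n → ℝ :=
  fun l => (if e.2 = l then 1 else 0) - (if e.1 = l then 1 else 0)

def indicatorDiff (I J : Finset (Fin n)) : Fin n → ℝ :=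
  fun l => (if l ∈ J then 1 else 0) - (if l ∈ I then 1 else 0)

theorem edgeVec_dotProduct (e : Fin n × Fin n) (x : Fin n → ℝ) :
    edgeVec e ⬝ᵥ x = x e.2 - x e.1 := by
  simp [edgeVec, dotProduct, sub_mul, Finset.sum_sub_distrib]

theorem indicatorDiff_dotProduct (I J : Finset (Fin n)) (x : Fin n → ℝ) :
    indicatorDiff I J ⬝ᵥ x = ∑ j ∈ J, x j - ∑ i ∈ I, x i := by
  simp [indicatorDiff, dotProduct, sub_mul, Finset.sum_sub_distrib, Finset.sum_ite_mem]

theorem lambdaLP_eq_lpDualValue (E : Finset (Fin n × Fin n)) (γ : Fin n × Fin n → ℝ)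
    (I J : Finset (Fin n)) : lambdaLP E γ I J = lpDualValue E edgeVec γ (indicatorDiff I J) := by
  simp only [lambdaLP, lpDualValue, funext_iff, Finset.sum_apply, Pi.smul_apply, smul_eq_mul,
    edgeVec, indicatorDiff]

theorem sSup_image_indicatorDiff_dotProduct_eq_lambdaLP (E : Finset (Fin n × Fin n))
    (γ : Fin n × Fin n → ℝ) (I J : Finset (Fin n))
    (hP : {y : Fin n → ℝ | ∀ e ∈ E, y e.2 - y e.1 ≤ γ e}.Nonempty) :
    sSup ((fun x => ((indicatorDiff I J ⬝ᵥ x : ℝ) : EReal)) ''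
      {y : Fin n → ℝ | ∀ e ∈ E, y e.2 - y e.1 ≤ γ e}) = lambdaLP E γ I J := by
  simp only [← edgeVec_dotProduct] at hP ⊢
  rw [lambdaLP_eq_lpDualValue]
  exact sSup_image_dotProduct_eq_lpDualValue hP

end Graph

theorem sup_over_L2_sum_eq_lambda_add_lambda_general {n : ℕ}
    (E₁ E₂ : Finset (Fin n × Fin n))
    (γ₁ γ₂ : Fin n × Fin n → ℝ)
    (P₁ P₂ : Set (Fin n → ℝ))
    (hP₁ : P₁ = {y : Fin n → ℝ | ∀ e ∈ E₁, y e.2 - y e.1 ≤ γ₁ e})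
    (hP₂ : P₂ = {y : Fin n → ℝ | ∀ e ∈ E₂, y e.2 - y e.1 ≤ γ₂ e})
    (hne₁ : P₁.Nonempty) (hne₂ : P₂.Nonempty)
    (I J : Finset (Fin n)) :
    sSup {v : EReal | ∃ x ∈ P₁ + P₂,
        v = (((∑ j ∈ J, x j) - ∑ i ∈ I, x i : ℝ) : EReal)} =
      lambdaLP E₁ γ₁ I J + lambdaLP E₂ γ₂ I J := by
  have hset : {v : EReal | ∃ x ∈ P₁ + P₂, v = (((∑ j ∈ J, x j) - ∑ i ∈ I, x i : ℝ) : EReal)} =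
      (fun x => ((indicatorDiff I J ⬝ᵥ x : ℝ) : EReal)) '' (P₁ + P₂) := by
    ext v
    simp only [Set.mem_ofPred_eq, Set.mem_image, indicatorDiff_dotProduct, eq_comm]
  subst hP₁ hP₂
  rw [hset, EReal.sSup_image_add_of_map_add _ (fun x y => by simp [dotProduct_add]),
    sSup_image_indicatorDiff_dotProduct_eq_lambdaLP _ _ _ _ hne₁,
    sSup_image_indicatorDiff_dotProduct_eq_lambdaLP _ _ _ _ hne₂]

/-- For `P = P₁ + P₂` with each `P_k = {y : y_j - y_i ≤ γ^{(k)}_{ij}, (i,j) ∈ E_k}`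
nonempty, and disjoint `I, J` with `|I| = |J|`:
`sup {x(J) - x(I) : x ∈ P} = λ(I,J;G₁) + λ(I,J;G₂)` in `ℝ ∪ {+∞}`. -/
theorem sup_over_L2_sum_eq_lambda_add_lambda {n : ℕ}
    (E₁ E₂ : Finset (Fin n × Fin n))
    (hE₁ : ∀ e ∈ E₁, e.1 ≠ e.2) (hE₂ : ∀ e ∈ E₂, e.1 ≠ e.2)
    (γ₁ γ₂ : Fin n × Fin n → ℝ)
    (P₁ P₂ : Set (Fin n → ℝ))
    (hP₁ : P₁ = {y : Fin n → ℝ | ∀ e ∈ E₁, y e.2 - y e.1 ≤ γ₁ e})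
    (hP₂ : P₂ = {y : Fin n → ℝ | ∀ e ∈ E₂, y e.2 - y e.1 ≤ γ₂ e})
    (hne₁ : P₁.Nonempty) (hne₂ : P₂.Nonempty)
    (I J : Finset (Fin n)) (hIJ : Disjoint I J) (hcard : I.card = J.card) :
    sSup {v : EReal | ∃ x ∈ P₁ + P₂,
        v = (((∑ j ∈ J, x j) - ∑ i ∈ I, x i : ℝ) : EReal)} =
      lambdaLP E₁ γ₁ I J + lambdaLP E₂ γ₂ I J :=
  sup_over_L2_sum_eq_lambda_add_lambda_general E₁ E₂ γ₁ γ₂ P₁ P₂ hP₁ hP₂ hne₁ hne₂ I J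
end

section
/- For every L₂-convex set T ⊆ ℤ^{n+1}, the set S = {x ∈ ℤ^n : (x,0) ∈ T} is an L₂♮-convex subset of ℤ^n; conversely, for every L₂♮-convex set S ⊆ ℤ^n there exists an L₂-convex set T ⊆ ℤ^{n+1} with S = {x ∈ ℤ^n : (x,0) ∈ T}. -/
open Pointwise

/-- A nonempty set `S ⊆ ℤⁿ` is L♮-convex if it is the intersection of an
L-convex set `T ⊆ ℤ^{n+1}` with the coordinate hyperplane "last coordinate 0". -/
def IsLNatConvexSet {n : ℕ} (S : Set (Fin n → ℤ)) : Prop :=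
  S.Nonempty ∧
  ∃ T : Set (Fin (n + 1) → ℤ), IsLConvexSet T ∧
    S = {x : Fin n → ℤ | Fin.snoc x (0 : ℤ) ∈ T}

/-- A set is L₂♮-convex if it is the Minkowski sum of two L♮-convex sets. -/
def IsL2NatConvexSet {n : ℕ} (S : Set (Fin n → ℤ)) : Prop :=
  ∃ S₁ S₂ : Set (Fin n → ℤ), IsLNatConvexSet S₁ ∧ IsLNatConvexSet S₂ ∧ S = S₁ + S₂

lemma snoc_add_snoc {n : ℕ} (y z : Fin n → ℤ) (a b : ℤ) :
    (Fin.snoc y a : Fin (n + 1) → ℤ) + Fin.snoc z b = Fin.snoc (y + z) (a + b) := by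
  funext i
  refine Fin.lastCases ?_ ?_ i <;> simp

/-- Normalizing a point of an L-convex set to have last coordinate 0. -/
lemma shift_to_section {n : ℕ} {T : Set (Fin (n + 1) → ℤ)} (hT : IsLConvexSet T)
    {w : Fin (n + 1) → ℤ} (hw : w ∈ T) (μ : ℤ) (hμ : w (Fin.last n) + μ = 0) :
    Fin.snoc (Fin.init (w + fun _ => μ)) (0 : ℤ) ∈ T := by
  have h := hT.2.2 w hw μ
  set w' : Fin (n + 1) → ℤ := w + fun _ => μ with hw'
  have h0 : w' (Fin.last n) = 0 := hμ
  have : Fin.snoc (Fin.init w') (0 : ℤ) = w' := by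
    conv_lhs => rw [← h0]
    exact Fin.snoc_init_self _
  rwa [this]

lemma section_nonempty {n : ℕ} {T : Set (Fin (n + 1) → ℤ)} (hT : IsLConvexSet T) :
    {x : Fin n → ℤ | Fin.snoc x (0 : ℤ) ∈ T}.Nonempty := by
  obtain ⟨w, hw⟩ := hT.1
  exact ⟨Fin.init (w + fun _ => -(w (Fin.last n))),
    shift_to_section hT hw _ (by ring)⟩

lemma section_sum {n : ℕ} {T₁ T₂ : Set (Fin (n + 1) → ℤ)}
    (h₁ : IsLConvexSet T₁) (h₂ : IsLConvexSet T₂) :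
    {x : Fin n → ℤ | Fin.snoc x (0 : ℤ) ∈ T₁ + T₂}
      = {x : Fin n → ℤ | Fin.snoc x (0 : ℤ) ∈ T₁}
        + {x : Fin n → ℤ | Fin.snoc x (0 : ℤ) ∈ T₂} := by
  ext x
  constructor
  · intro hx
    obtain ⟨u, hu, v, hv, huv⟩ := hx
    set α := u (Fin.last n) with hα
    have hlast : u (Fin.last n) + v (Fin.last n) = 0 := by
      have := congrFun huv (Fin.last n)
      simpa using this
    refine ⟨Fin.init (u + fun _ => -α), shift_to_section h₁ hu _ (by ring),
      Fin.init (v + fun _ => α), shift_to_section h₂ hv _ (by linarith), ?_⟩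
    funext i
    have hx' := congrFun huv (Fin.castSucc i)
    simp only [Fin.snoc_castSucc, Pi.add_apply] at hx' ⊢
    simp only [Fin.init, Pi.add_apply]
    linarith
  · rintro ⟨y, hy, z, hz, rfl⟩
    have : Fin.snoc (y + z) (0 : ℤ) = (Fin.snoc y (0 : ℤ) : Fin (n + 1) → ℤ) + Fin.snoc z (0 : ℤ) := by
      rw [snoc_add_snoc]; norm_num
    show Fin.snoc (y + z) (0 : ℤ) ∈ T₁ + T₂
    rw [this]
    exact Set.add_mem_add hy hz

/-- L₂♮-convex sets are exactly the intersections of L₂-convex sets with the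
coordinate hyperplane "last coordinate 0". -/
theorem L2nat_iff_hyperplane_section_of_L2 {n : ℕ} :
    (∀ T : Set (Fin (n + 1) → ℤ), IsL2ConvexSet T →
      IsL2NatConvexSet {x : Fin n → ℤ | Fin.snoc x (0 : ℤ) ∈ T}) ∧
    (∀ S : Set (Fin n → ℤ), IsL2NatConvexSet S →
      ∃ T : Set (Fin (n + 1) → ℤ), IsL2ConvexSet T ∧
        S = {x : Fin n → ℤ | Fin.snoc x (0 : ℤ) ∈ T}) := by
  constructor
  · rintro T ⟨T₁, T₂, h₁, h₂, rfl⟩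
    exact ⟨{x | Fin.snoc x (0 : ℤ) ∈ T₁}, {x | Fin.snoc x (0 : ℤ) ∈ T₂},
      ⟨section_nonempty h₁, T₁, h₁, rfl⟩, ⟨section_nonempty h₂, T₂, h₂, rfl⟩,
      section_sum h₁ h₂⟩
  · rintro S ⟨S₁, S₂, ⟨hne₁, T₁, h₁, rfl⟩, ⟨hne₂, T₂, h₂, rfl⟩, rfl⟩
    exact ⟨T₁ + T₂, ⟨T₁, T₂, h₁, h₂, rfl⟩, (section_sum h₁ h₂).symm⟩
end

section
/- For every L₂-convex polyhedron Q ⊆ ℝ^{n+1}, the set P = {x ∈ ℝ^n : (x,0) ∈ Q} is an L₂♮-convex polyhedron in ℝ^n; conversely, for every L₂♮-convex polyhedron P ⊆ ℝ^n there exists an L₂-convex polyhedron Q ⊆ ℝ^{n+1} with P = {x ∈ ℝ^n : (x,0) ∈ Q}. -/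
open Pointwise

/-- A polyhedron `P ⊆ ℝⁿ` is L♮-convex if it is the intersection of an
L-convex polyhedron `Q ⊆ ℝ^{n+1}` with the hyperplane "last coordinate 0". -/
def IsLNatConvexPoly {n : ℕ} (P : Set (Fin n → ℝ)) : Prop :=
  IsPolyhedron P ∧
  ∃ Q : Set (Fin (n + 1) → ℝ), IsLConvexPoly Q ∧
    P = {x : Fin n → ℝ | Fin.snoc x (0 : ℝ) ∈ Q}

/-- A polyhedron is L₂♮-convex if it is the Minkowski sum of two L♮-convex
polyhedra. -/
def IsL2NatConvexPoly {n : ℕ} (P : Set (Fin n → ℝ)) : Prop :=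
  IsPolyhedron P ∧
  ∃ P₁ P₂ : Set (Fin n → ℝ), IsLNatConvexPoly P₁ ∧ IsLNatConvexPoly P₂ ∧ P = P₁ + P₂

namespace L2Aux

/-- The hyperplane section `{x : (x,0) ∈ Q}`. -/
def Sect {n : ℕ} (Q : Set (Fin (n + 1) → ℝ)) : Set (Fin n → ℝ) :=
  {x : Fin n → ℝ | Fin.snoc x (0 : ℝ) ∈ Q}

/-- The "lift" of `P ⊆ ℝⁿ`: all `z ∈ ℝ^{n+1}` such that subtracting the
last coordinate from the first `n` coordinates lands in `P`. -/
def Lift {n : ℕ} (P : Set (Fin n → ℝ)) : Set (Fin (n + 1) → ℝ) :=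
  {z | (fun j : Fin n => z j.castSucc - z (Fin.last n)) ∈ P}

lemma snoc_add_snoc {n : ℕ} (a b : Fin n → ℝ) (c d : ℝ) :
    (Fin.snoc a c : Fin (n + 1) → ℝ) + (Fin.snoc b d : Fin (n + 1) → ℝ)
      = (Fin.snoc (a + b) (c + d) : Fin (n + 1) → ℝ) := by
  funext j
  cases j using Fin.lastCases with
  | last => simp
  | cast i => simp

/-- The section of a polyhedron is a polyhedron. -/
lemma sect_poly {n : ℕ} {Q : Set (Fin (n + 1) → ℝ)} (hQ : IsPolyhedron Q) :
    IsPolyhedron (Sect Q) := by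
  obtain ⟨m, A, b, rfl⟩ := hQ
  refine ⟨m, fun i j => A i j.castSucc, b, ?_⟩
  ext x
  simp only [Sect, Set.mem_setOf_eq]
  have key : ∀ i, ∑ j, A i j * (Fin.snoc x (0 : ℝ) : Fin (n + 1) → ℝ) j
      = ∑ j, A i j.castSucc * x j := by
    intro i
    rw [Fin.sum_univ_castSucc]
    simp
  exact forall_congr' fun i => by rw [key]

/-- The lift of a polyhedron is a polyhedron. -/
lemma lift_poly {n : ℕ} {P : Set (Fin n → ℝ)} (hP : IsPolyhedron P) :
    IsPolyhedron (Lift P) := by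
  obtain ⟨m, A, b, rfl⟩ := hP
  refine ⟨m, fun i => Fin.snoc (A i) (-∑ j, A i j), b, ?_⟩
  ext z
  simp only [Lift, Set.mem_setOf_eq]
  have key : ∀ i, ∑ j', (Fin.snoc (A i) (-∑ j, A i j) : Fin (n + 1) → ℝ) j' * z j'
      = ∑ j, A i j * (z j.castSucc - z (Fin.last n)) := by
    intro i
    rw [Fin.sum_univ_castSucc]
    simp only [Fin.snoc_castSucc, Fin.snoc_last, mul_sub, Finset.sum_sub_distrib,
      neg_mul, ← Finset.sum_mul]
    ring
  exact (forall_congr' fun i => by rw [key]).symm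

/-- The section of the lift is the original set. -/
lemma sect_lift {n : ℕ} (P : Set (Fin n → ℝ)) : Sect (Lift P) = P := by
  ext x
  simp only [Sect, Lift, Set.mem_setOf_eq, Fin.snoc_castSucc, Fin.snoc_last, sub_zero]

/-- If `R` is translation-invariant, the lift of its section is `R` itself. -/
lemma lift_sect {n : ℕ} {R : Set (Fin (n + 1) → ℝ)}
    (hR : ∀ x ∈ R, ∀ μ : ℝ, (x + fun _ => μ) ∈ R) : Lift (Sect R) = R := by
  have hsnoc : ∀ z : Fin (n + 1) → ℝ,
      Fin.snoc (fun j : Fin n => z j.castSucc - z (Fin.last n)) (0 : ℝ)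
        = z + fun _ => -(z (Fin.last n)) := by
    intro z
    funext j
    cases j using Fin.lastCases with
    | last => simp
    | cast i => simp [sub_eq_add_neg]
  ext z
  simp only [Lift, Sect, Set.mem_setOf_eq, hsnoc]
  constructor
  · intro h
    have := hR _ h (z (Fin.last n))
    convert this using 1
    funext j
    simp [sub_eq_add_neg]
  · intro h
    exact hR _ h _

/-- The lift distributes over Minkowski sums. -/
lemma lift_add {n : ℕ} (P₁ P₂ : Set (Fin n → ℝ)) :
    Lift (P₁ + P₂) = Lift P₁ + Lift P₂ := by
  ext z
  constructor
  · intro hz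
    rcases Set.mem_add.1 hz with ⟨a, ha, b, hb, hab⟩
    refine Set.mem_add.2 ⟨Fin.snoc a 0, ?_,
      Fin.snoc (b + fun _ => z (Fin.last n)) (z (Fin.last n)), ?_, ?_⟩
    · simp only [Lift, Set.mem_setOf_eq, Fin.snoc_castSucc, Fin.snoc_last, sub_zero]
      exact ha
    · simp only [Lift, Set.mem_setOf_eq, Fin.snoc_castSucc, Fin.snoc_last]
      convert hb using 1
      funext j
      simp
    · rw [snoc_add_snoc]
      funext j
      refine Fin.lastCases ?_ ?_ j
      · simp
      · intro i
        have h := congrFun hab i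
        simp only [Pi.add_apply] at h
        rw [Fin.snoc_castSucc]
        simp only [Pi.add_apply]
        linarith
  · intro hz
    rcases Set.mem_add.1 hz with ⟨a, ha, b, hb, hab⟩
    subst hab
    refine Set.mem_add.2 ⟨_, ha, _, hb, ?_⟩
    funext j
    simp only [Pi.add_apply]
    ring

/-- The section distributes over Minkowski sums of translation-invariant sets. -/
lemma sect_add {n : ℕ} {Q₁ Q₂ : Set (Fin (n + 1) → ℝ)}
    (h₁ : ∀ x ∈ Q₁, ∀ μ : ℝ, (x + fun _ => μ) ∈ Q₁)
    (h₂ : ∀ x ∈ Q₂, ∀ μ : ℝ, (x + fun _ => μ) ∈ Q₂) :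
    Sect (Q₁ + Q₂) = Sect Q₁ + Sect Q₂ := by
  have := lift_add (Sect Q₁) (Sect Q₂)
  rw [lift_sect h₁, lift_sect h₂] at this
  rw [← this, sect_lift]

end L2Aux

open L2Aux in
/-- L₂♮-convex polyhedra are exactly the intersections of L₂-convex polyhedra
with the hyperplane "last coordinate 0". -/
theorem L2nat_poly_iff_hyperplane_section_of_L2_poly {n : ℕ} :
    (∀ Q : Set (Fin (n + 1) → ℝ), IsL2ConvexPoly Q →
      IsL2NatConvexPoly {x : Fin n → ℝ | Fin.snoc x (0 : ℝ) ∈ Q}) ∧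
    (∀ P : Set (Fin n → ℝ), IsL2NatConvexPoly P →
      ∃ Q : Set (Fin (n + 1) → ℝ), IsL2ConvexPoly Q ∧
        P = {x : Fin n → ℝ | Fin.snoc x (0 : ℝ) ∈ Q}) := by
  constructor
  · rintro Q ⟨hQpoly, Q₁, Q₂, h₁, h₂, rfl⟩
    refine ⟨sect_poly hQpoly, Sect Q₁, Sect Q₂, ?_, ?_, ?_⟩
    · exact ⟨sect_poly h₁.1, Q₁, h₁, rfl⟩
    · exact ⟨sect_poly h₂.1, Q₂, h₂, rfl⟩
    · exact sect_add h₁.2.2.2 h₂.2.2.2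
  · rintro P ⟨hPpoly, P₁, P₂, ⟨hP₁poly, R₁, hR₁, hP₁eq⟩, ⟨hP₂poly, R₂, hR₂, hP₂eq⟩, rfl⟩
    refine ⟨Lift (P₁ + P₂), ⟨lift_poly hPpoly, R₁, R₂, hR₁, hR₂, ?_⟩, (sect_lift _).symm⟩
    rw [lift_add, hP₁eq, hP₂eq]
    show Lift (Sect R₁) + Lift (Sect R₂) = R₁ + R₂
    rw [lift_sect hR₁.2.2.2, lift_sect hR₂.2.2.2]
end

section
/- A polyhedron P ⊆ ℝ^n is L-convex if and only if it is both L₂-convex and L♮-convex. -/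
open Pointwise

/-- The set of constant vectors is an L-convex polyhedron. -/
lemma constants_LConvex {n : ℕ} :
    IsLConvexPoly {x : Fin n → ℝ | ∃ c : ℝ, x = fun _ => c} := by
  refine ⟨?_, ⟨(fun _ => 0), 0, rfl⟩, ?_, ?_⟩
  · refine ⟨n * n, fun p k =>
      (if k = (finProdFinEquiv.symm p).1 then (1:ℝ) else 0) -
      (if k = (finProdFinEquiv.symm p).2 then 1 else 0), fun _ => 0, ?_⟩
    have hsum : ∀ (x : Fin n → ℝ) (i j : Fin n),
        ∑ k, ((if k = i then (1:ℝ) else 0) - (if k = j then 1 else 0)) * x k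
          = x i - x j := by
      intro x i j
      simp [sub_mul, Finset.sum_sub_distrib, ite_mul]
    ext x
    simp only [Set.mem_setOf_eq]
    constructor
    · rintro ⟨c, rfl⟩ p
      rw [hsum]
      simp
    · intro h
      rcases Nat.eq_zero_or_pos n with hn | hn
      · subst hn
        exact ⟨0, funext fun i => i.elim0⟩
      · have hij : ∀ i j : Fin n, x i ≤ x j := by
          intro i j
          have := h (finProdFinEquiv (i, j))
          rw [Equiv.symm_apply_apply] at this
          rw [hsum] at this
          linarith
        refine ⟨x ⟨0, hn⟩, funext fun i => le_antisymm (hij i _) (hij _ i)⟩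
  · rintro x ⟨c, rfl⟩ y ⟨d, rfl⟩
    exact ⟨⟨max c d, rfl⟩, ⟨min c d, rfl⟩⟩
  · rintro x ⟨c, rfl⟩ μ
    exact ⟨c + μ, rfl⟩

/-- A polyhedron is L-convex iff it is both L₂-convex and L♮-convex. -/
theorem LConvexPoly_iff_L2_and_Lnat {n : ℕ} (P : Set (Fin n → ℝ))
    (hP : IsPolyhedron P) :
    IsLConvexPoly P ↔ IsL2ConvexPoly P ∧ IsLNatConvexPoly P := by
  constructor
  · rintro ⟨-, hne, hlat, htr⟩
    constructor
    · -- L₂-convex: P = P + (constants)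
      refine ⟨hP, P, {x | ∃ c : ℝ, x = fun _ => c}, ⟨hP, hne, hlat, htr⟩,
        constants_LConvex, ?_⟩
      ext x
      rw [Set.mem_add]
      constructor
      · intro hx
        exact ⟨x, hx, (fun _ => 0), ⟨0, rfl⟩, by funext k; simp⟩
      · rintro ⟨y, hy, z, ⟨c, rfl⟩, rfl⟩
        exact htr y hy c
    · -- L♮-convex via Q = {z | (z_j - z_last)_j ∈ P}
      refine ⟨hP, {z : Fin (n+1) → ℝ |
        (fun j : Fin n => z j.castSucc - z (Fin.last n)) ∈ P}, ⟨?_, ?_, ?_, ?_⟩, ?_⟩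
      · -- polyhedron
        obtain ⟨m, A, b, rfl⟩ := hP
        refine ⟨m, fun i => Fin.snoc (A i) (-∑ j, A i j), b, ?_⟩
        ext z
        have key : ∀ i, ∑ k, (Fin.snoc (A i) (-∑ j, A i j) : Fin (n+1) → ℝ) k * z k
            = ∑ j, A i j * (z j.castSucc - z (Fin.last n)) := by
          intro i
          simp only [Fin.sum_univ_castSucc, Fin.snoc_castSucc, Fin.snoc_last, mul_sub,
            Finset.sum_sub_distrib, neg_mul, Finset.sum_mul]
          ring
        simp only [Set.mem_setOf_eq, key]
      · -- nonempty
        obtain ⟨x₀, hx₀⟩ := hne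
        refine ⟨Fin.snoc x₀ 0, ?_⟩
        simp only [Set.mem_setOf_eq, Fin.snoc_castSucc, Fin.snoc_last, sub_zero]
        exact hx₀
      · -- lattice closure
        intro z hz w hw
        simp only [Set.mem_setOf_eq] at hz hw ⊢
        set s := z (Fin.last n) with hs
        set t := w (Fin.last n) with ht
        constructor
        · rcases le_total t s with h | h
          · have : (fun j : Fin n => (z ⊔ w) j.castSucc - (z ⊔ w) (Fin.last n))
                = (fun j => z j.castSucc - s) ⊔
                  ((fun j => w j.castSucc - t) + fun _ => t - s) := by
              funext j
              simp only [Pi.sup_apply, Pi.add_apply]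
              rw [sup_eq_left.mpr h, ← max_sub_sub_right]
              congr 1
              ring
            rw [this]
            exact (hlat _ hz _ (htr _ hw (t - s))).1
          · have : (fun j : Fin n => (z ⊔ w) j.castSucc - (z ⊔ w) (Fin.last n))
                = ((fun j => z j.castSucc - s) + fun _ => s - t) ⊔
                  (fun j => w j.castSucc - t) := by
              funext j
              simp only [Pi.sup_apply, Pi.add_apply]
              rw [sup_eq_right.mpr h, ← max_sub_sub_right]
              congr 1
              ring
            rw [this]
            exact (hlat _ (htr _ hz (s - t)) _ hw).1
        · rcases le_total t s with h | h
          · have : (fun j : Fin n => (z ⊓ w) j.castSucc - (z ⊓ w) (Fin.last n))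
                = ((fun j => z j.castSucc - s) + fun _ => s - t) ⊓
                  (fun j => w j.castSucc - t) := by
              funext j
              simp only [Pi.inf_apply, Pi.add_apply]
              rw [inf_eq_right.mpr h, ← min_sub_sub_right]
              congr 1
              ring
            rw [this]
            exact (hlat _ (htr _ hz (s - t)) _ hw).2
          · have : (fun j : Fin n => (z ⊓ w) j.castSucc - (z ⊓ w) (Fin.last n))
                = (fun j => z j.castSucc - s) ⊓
                  ((fun j => w j.castSucc - t) + fun _ => t - s) := by
              funext j
              simp only [Pi.inf_apply, Pi.add_apply]
              rw [inf_eq_left.mpr h, ← min_sub_sub_right]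
              congr 1
              ring
            rw [this]
            exact (hlat _ hz _ (htr _ hw (t - s))).2
      · -- translation closure
        intro z hz μ
        simp only [Set.mem_setOf_eq, Pi.add_apply] at hz ⊢
        have : (fun j : Fin n => z j.castSucc + μ - (z (Fin.last n) + μ))
            = fun j => z j.castSucc - z (Fin.last n) := by
          funext j; ring
        rw [this]
        exact hz
      · -- P equals the slice
        ext x
        simp only [Set.mem_setOf_eq, Fin.snoc_castSucc, Fin.snoc_last, sub_zero]
  · rintro ⟨⟨-, P₁, P₂, h₁, h₂, hsum⟩, ⟨-, Q, hQ, hPQ⟩⟩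
    refine ⟨hP, ?_, ?_, ?_⟩
    · -- nonempty
      obtain ⟨x₁, hx₁⟩ := h₁.2.1
      obtain ⟨x₂, hx₂⟩ := h₂.2.1
      rw [hsum]
      exact ⟨x₁ + x₂, Set.add_mem_add hx₁ hx₂⟩
    · -- lattice from L♮
      intro x hx y hy
      rw [hPQ] at hx hy
      have hsnoc_sup : (Fin.snoc (x ⊔ y) (0:ℝ) : Fin (n+1) → ℝ)
          = Fin.snoc x 0 ⊔ Fin.snoc y 0 := by
        funext k
        refine Fin.lastCases ?_ ?_ k <;>
          simp [Pi.sup_apply, Fin.snoc_last, Fin.snoc_castSucc]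
      have hsnoc_inf : (Fin.snoc (x ⊓ y) (0:ℝ) : Fin (n+1) → ℝ)
          = Fin.snoc x 0 ⊓ Fin.snoc y 0 := by
        funext k
        refine Fin.lastCases ?_ ?_ k <;>
          simp [Pi.inf_apply, Fin.snoc_last, Fin.snoc_castSucc]
      constructor
      · rw [hPQ]
        simp only [Set.mem_setOf_eq, hsnoc_sup]
        exact (hQ.2.2.1 _ hx _ hy).1
      · rw [hPQ]
        simp only [Set.mem_setOf_eq, hsnoc_inf]
        exact (hQ.2.2.1 _ hx _ hy).2
    · -- translation from L₂
      intro x hx μ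
      rw [hsum] at hx ⊢
      rw [Set.mem_add] at hx ⊢
      obtain ⟨y, hy, z, hz, rfl⟩ := hx
      refine ⟨y + fun _ => μ, h₁.2.2.2 y hy μ, z, hz, ?_⟩
      funext k
      simp only [Pi.add_apply]
      ring
end

section
/- A set S ⊆ ℤ^n is L-convex if and only if it is both L₂-convex and L♮-convex. -/
open Pointwise

/-- A set `S ⊆ ℤⁿ` is L-convex iff it is both L₂-convex and L♮-convex. -/
theorem LConvexSet_iff_L2_and_Lnat {n : ℕ} (S : Set (Fin n → ℤ)) :
    IsLConvexSet S ↔ IsL2ConvexSet S ∧ IsLNatConvexSet S := by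
  constructor
  · rintro ⟨hne, hlat, htr⟩
    refine ⟨⟨S, {f | ∃ μ : ℤ, f = fun _ => μ}, ⟨hne, hlat, htr⟩, ?_, ?_⟩, hne, ?_⟩
    · refine ⟨⟨fun _ => 0, 0, rfl⟩, ?_, ?_⟩
      · rintro x ⟨μ, rfl⟩ y ⟨ν, rfl⟩
        exact ⟨⟨μ ⊔ ν, by funext i; simp [Pi.sup_apply]⟩,
               ⟨μ ⊓ ν, by funext i; simp [Pi.inf_apply]⟩⟩
      · rintro x ⟨μ, rfl⟩ ν
        exact ⟨μ + ν, rfl⟩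
    · ext x
      constructor
      · intro hx
        exact Set.mem_add.2 ⟨x, hx, fun _ => 0, ⟨0, rfl⟩, by funext i; simp⟩
      · intro hx
        obtain ⟨y, hy, z, ⟨μ, rfl⟩, rfl⟩ := Set.mem_add.1 hx
        exact htr y hy μ
    · refine ⟨{y : Fin (n+1) → ℤ | (fun i : Fin n => y i.castSucc - y (Fin.last n)) ∈ S},
        ⟨?_, ?_, ?_⟩, ?_⟩
      · obtain ⟨x₀, hx₀⟩ := hne
        refine ⟨Fin.snoc x₀ 0, ?_⟩
        simpa using hx₀
      · intro y hy z hz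
        have key : ∀ a b : Fin (n+1) → ℤ,
            (fun i : Fin n => a i.castSucc - a (Fin.last n)) ∈ S →
            (fun i : Fin n => b i.castSucc - b (Fin.last n)) ∈ S →
            a (Fin.last n) ≤ b (Fin.last n) →
            (a ⊔ b) ∈ {y : Fin (n+1) → ℤ |
              (fun i : Fin n => y i.castSucc - y (Fin.last n)) ∈ S} ∧
            (a ⊓ b) ∈ {y : Fin (n+1) → ℤ |
              (fun i : Fin n => y i.castSucc - y (Fin.last n)) ∈ S} := by
          intro a b ha hb hle
          constructor
          · have ha' : (fun i : Fin n => a i.castSucc - b (Fin.last n)) ∈ S := by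
              have h2 := htr _ ha (a (Fin.last n) - b (Fin.last n))
              have heq : ((fun i : Fin n => a i.castSucc - a (Fin.last n)) +
                  fun _ => a (Fin.last n) - b (Fin.last n)) =
                  fun i : Fin n => a i.castSucc - b (Fin.last n) :=
                funext fun i => by simp only [Pi.add_apply]; ring
              rwa [heq] at h2
            have h3 := (hlat _ ha' _ hb).1
            have heq : (fun i : Fin n => (a ⊔ b) i.castSucc - (a ⊔ b) (Fin.last n)) =
                (fun i : Fin n => a i.castSucc - b (Fin.last n)) ⊔
                  fun i : Fin n => b i.castSucc - b (Fin.last n) :=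
              funext fun i => by
                simp only [Pi.sup_apply]
                rw [max_eq_right hle, max_sub_sub_right]
            show (fun i : Fin n => (a ⊔ b) i.castSucc - (a ⊔ b) (Fin.last n)) ∈ S
            rw [heq]; exact h3
          · have hb' : (fun i : Fin n => b i.castSucc - a (Fin.last n)) ∈ S := by
              have h2 := htr _ hb (b (Fin.last n) - a (Fin.last n))
              have heq : ((fun i : Fin n => b i.castSucc - b (Fin.last n)) +
                  fun _ => b (Fin.last n) - a (Fin.last n)) =
                  fun i : Fin n => b i.castSucc - a (Fin.last n) :=
                funext fun i => by simp only [Pi.add_apply]; ring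
              rwa [heq] at h2
            have h3 := (hlat _ ha _ hb').2
            have heq : (fun i : Fin n => (a ⊓ b) i.castSucc - (a ⊓ b) (Fin.last n)) =
                (fun i : Fin n => a i.castSucc - a (Fin.last n)) ⊓
                  fun i : Fin n => b i.castSucc - a (Fin.last n) :=
              funext fun i => by
                simp only [Pi.inf_apply]
                rw [min_eq_left hle, min_sub_sub_right]
            show (fun i : Fin n => (a ⊓ b) i.castSucc - (a ⊓ b) (Fin.last n)) ∈ S
            rw [heq]; exact h3
        rcases le_total (y (Fin.last n)) (z (Fin.last n)) with h | h
        · exact key y z hy hz h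
        · have := key z y hz hy h
          rw [sup_comm, inf_comm] at this
          exact this
      · intro y hy μ
        have heq : (fun i : Fin n => (y + fun _ : Fin (n+1) => μ) i.castSucc -
            (y + fun _ : Fin (n+1) => μ) (Fin.last n)) =
            fun i : Fin n => y i.castSucc - y (Fin.last n) :=
          funext fun i => by simp only [Pi.add_apply]; ring
        show (fun i : Fin n => (y + fun _ : Fin (n+1) => μ) i.castSucc -
          (y + fun _ : Fin (n+1) => μ) (Fin.last n)) ∈ S
        rw [heq]; exact hy
      · ext x
        simp [Fin.snoc_castSucc, Fin.snoc_last]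
  · rintro ⟨⟨S₁, S₂, h1, h2, hsum⟩, hne, T, ⟨_, hTlat, hTtr⟩, hST⟩
    refine ⟨hne, ?_, ?_⟩
    · intro x hx y hy
      rw [hST] at hx hy
      have hx' : (Fin.snoc x 0 : Fin (n+1) → ℤ) ∈ T := hx
      have hy' : (Fin.snoc y 0 : Fin (n+1) → ℤ) ∈ T := hy
      have hs := hTlat _ hx' _ hy'
      have hsup : (Fin.snoc (x ⊔ y) 0 : Fin (n+1) → ℤ) =
          (Fin.snoc x 0 : Fin (n+1) → ℤ) ⊔ (Fin.snoc y 0 : Fin (n+1) → ℤ) := by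
        funext i
        refine Fin.lastCases ?_ ?_ i <;> simp [Pi.sup_apply]
      have hinf : (Fin.snoc (x ⊓ y) 0 : Fin (n+1) → ℤ) =
          (Fin.snoc x 0 : Fin (n+1) → ℤ) ⊓ (Fin.snoc y 0 : Fin (n+1) → ℤ) := by
        funext i
        refine Fin.lastCases ?_ ?_ i <;> simp [Pi.inf_apply]
      constructor
      · rw [hST, Set.mem_setOf_eq, hsup]; exact hs.1
      · rw [hST, Set.mem_setOf_eq, hinf]; exact hs.2
    · intro x hx μ
      rw [hsum] at hx ⊢
      obtain ⟨y, hy, z, hz, rfl⟩ := Set.mem_add.1 hx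
      refine Set.mem_add.2 ⟨y + fun _ => μ, h1.2.2 y hy μ, z, hz, ?_⟩
      funext i; simp only [Pi.add_apply]; ring
end
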